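/- arXiv:2107.14320 — 5 statements merged into one kernel-verified Lean document; each statement's English description precedes it below -/
import Mathlib

section
/- For every integer m ≥ 3, all rational numbers x_α and y_α, every τ in the upper half plane, and every matrix γ = [[a,b],[c,d]] ∈ SL₂(ℤ), one has G_{m,α}((aτ+b)/(cτ+d)) = (cτ+d)^m · G_{m,αγ}(τ), where αγ is the pair of rationals (d·x_α + b·y_α, c·x_α + a·y_α). -/
/-!
Write `γ = [[a,b],[c,d]]` and let `(k, ℓ) ↦ (k, ℓ)γ = (ka + ℓc, kb + ℓd)` act on row vectors;
it is a bijection of `ℤ² ∖ {0}`. Clearing `cτ + d` gives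
`k·γτ + ℓ = ((ka + ℓc)τ + (kb + ℓd)) / (cτ + d)`, and since `ad − bc = 1` the phase is invariant:
`k x − ℓ y = (ka + ℓc)(dx + by) − (kb + ℓd)(cx + ay)`. So the `(k, ℓ)`-term of `G_{m,α}(γτ)` is
`(cτ + d)^m` times the `(k, ℓ)γ`-term of `G_{m,αγ}(τ)`, and reindexing the sum along
`(k, ℓ) ↦ (k, ℓ)γ` gives the identity.
-/

open Complex Filter
open scoped MatrixGroups

/-- The level `N` Eisenstein series
`G_{m,α}(τ) = ∑_{(k,ℓ) ≠ (0,0)} e^{2πi(k x_α − ℓ y_α)}/(kτ+ℓ)^m` for `α = (x_α, y_α)`. -/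
noncomputable def eisG (m : ℕ) (xα yα : ℚ) (τ : UpperHalfPlane) : ℂ :=
  ∑' p : {p : ℤ × ℤ // p ≠ 0},
    Complex.exp (2 * Real.pi * I * ((p.1.1 : ℂ) * (xα : ℂ) - (p.1.2 : ℂ) * (yα : ℂ))) /
      ((p.1.1 : ℂ) * (τ : ℂ) + (p.1.2 : ℂ)) ^ m

namespace ModularGroup

variable (γ : SL(2,ℤ))

def rowMul (p : ℤ × ℤ) : ℤ × ℤ :=
  (p.1 * γ 0 0 + p.2 * γ 1 0, p.1 * γ 0 1 + p.2 * γ 1 1)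

@[simp]
lemma rowMul_one (p : ℤ × ℤ) : rowMul 1 p = p := by
  simp [rowMul]

lemma rowMul_mul (δ : SL(2,ℤ)) (p : ℤ × ℤ) : rowMul (γ * δ) p = rowMul δ (rowMul γ p) := by
  simp only [rowMul, Matrix.SpecialLinearGroup.coe_mul, Matrix.mul_apply, Fin.sum_univ_two,
    Prod.mk.injEq]
  constructor <;> ring

@[simp]
lemma rowMul_zero : rowMul γ 0 = 0 := by
  simp [rowMul]

def rowMulEquiv : ℤ × ℤ ≃ ℤ × ℤ where
  toFun := rowMul γ
  invFun := rowMul γ⁻¹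
  left_inv p := by rw [← rowMul_mul, mul_inv_cancel, rowMul_one]
  right_inv p := by rw [← rowMul_mul, inv_mul_cancel, rowMul_one]

def rowMulEquivNeZero : {p : ℤ × ℤ // p ≠ 0} ≃ {p : ℤ × ℤ // p ≠ 0} :=
  (rowMulEquiv γ).subtypeEquiv fun _ ↦ ((rowMulEquiv γ).injective.ne_iff' (rowMul_zero γ)).symm

lemma det_eq_one : (γ 0 0 : ℂ) * γ 1 1 - γ 0 1 * γ 1 0 = 1 := by
  have h := γ.det_coe
  rw [Matrix.det_fin_two] at h
  exact_mod_cast h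

lemma denom_ne_zero (τ : UpperHalfPlane) : (γ 1 0 : ℂ) * τ + γ 1 1 ≠ 0 :=
  denom_apply γ τ ▸ UpperHalfPlane.denom_ne_zero γ τ

lemma coe_smul (τ : UpperHalfPlane) :
    ((γ • τ : UpperHalfPlane) : ℂ) = ((γ 0 0 : ℂ) * τ + γ 0 1) / ((γ 1 0 : ℂ) * τ + γ 1 1) := by
  rw [UpperHalfPlane.coe_specialLinearGroup_apply]
  rfl

lemma linear_smul (τ : UpperHalfPlane) (p : ℤ × ℤ) :
    (p.1 : ℂ) * (γ • τ : UpperHalfPlane) + p.2 =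
      ((rowMul γ p).1 * τ + (rowMul γ p).2) / ((γ 1 0 : ℂ) * τ + γ 1 1) := by
  have hden := denom_ne_zero γ τ
  rw [coe_smul, eq_div_iff hden, add_mul, mul_assoc, div_mul_cancel₀ _ hden]
  simp only [rowMul]
  push_cast
  ring

lemma pairing_rowMul (x y : ℂ) (p : ℤ × ℤ) :
    (rowMul γ p).1 * (γ 1 1 * x + γ 0 1 * y) - (rowMul γ p).2 * (γ 1 0 * x + γ 0 0 * y) =
      p.1 * x - p.2 * y := by
  simp only [rowMul]
  push_cast
  linear_combination (p.1 * x - p.2 * y) * det_eq_one γ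

end ModularGroup

open ModularGroup

noncomputable def eisTerm (m : ℕ) (xα yα : ℚ) (τ : UpperHalfPlane) (p : ℤ × ℤ) : ℂ :=
  Complex.exp (2 * Real.pi * I * ((p.1 : ℂ) * xα - (p.2 : ℂ) * yα)) / ((p.1 : ℂ) * τ + p.2) ^ m

lemma eisTerm_smul (m : ℕ) (xα yα : ℚ) (τ : UpperHalfPlane) (γ : SL(2,ℤ)) (p : ℤ × ℤ) :
    eisTerm m xα yα (γ • τ) p =
      ((γ 1 0 : ℂ) * τ + γ 1 1) ^ m *
        eisTerm m (γ 1 1 * xα + γ 0 1 * yα) (γ 1 0 * xα + γ 0 0 * yα) τ (rowMul γ p) := by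
  have hphase := pairing_rowMul γ xα yα p
  rw [eisTerm, eisTerm]
  push_cast
  rw [linear_smul, hphase, div_pow, div_div_eq_mul_div]
  ring

theorem eisG_modular_general (m : ℕ) (xα yα : ℚ) (τ : UpperHalfPlane) (γ : SL(2,ℤ)) :
    eisG m xα yα (γ • τ) =
      (((γ : Matrix (Fin 2) (Fin 2) ℤ) 1 0 : ℂ) * (τ : ℂ)
          + ((γ : Matrix (Fin 2) (Fin 2) ℤ) 1 1 : ℂ)) ^ m *
        eisG m
          (((γ : Matrix (Fin 2) (Fin 2) ℤ) 1 1 : ℚ) * xα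
            + ((γ : Matrix (Fin 2) (Fin 2) ℤ) 0 1 : ℚ) * yα)
          (((γ : Matrix (Fin 2) (Fin 2) ℤ) 1 0 : ℚ) * xα
            + ((γ : Matrix (Fin 2) (Fin 2) ℤ) 0 0 : ℚ) * yα) τ := by
  change ∑' p : {p : ℤ × ℤ // p ≠ 0}, eisTerm m xα yα (γ • τ) p =
    _ * ∑' p : {p : ℤ × ℤ // p ≠ 0}, eisTerm m _ _ τ p
  rw [← tsum_mul_left]
  conv_rhs => rw [← (rowMulEquivNeZero γ).tsum_eq]
  exact tsum_congr fun p ↦ eisTerm_smul m xα yα τ γ p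

/-- Modularity of level `N` Eisenstein series: for `m ≥ 3`, `γ = [[a,b],[c,d]] ∈ SL₂(ℤ)`,
`G_{m,α}(γτ) = (cτ+d)^m G_{m,αγ}(τ)` where `αγ = (d x_α + b y_α, c x_α + a y_α)`. -/
theorem eisG_modular (m : ℕ) (hm : 3 ≤ m) (xα yα : ℚ) (τ : UpperHalfPlane) (γ : SL(2,ℤ)) :
    eisG m xα yα (γ • τ) =
      (((γ : Matrix (Fin 2) (Fin 2) ℤ) 1 0 : ℂ) * (τ : ℂ)
          + ((γ : Matrix (Fin 2) (Fin 2) ℤ) 1 1 : ℂ)) ^ m *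
        eisG m
          (((γ : Matrix (Fin 2) (Fin 2) ℤ) 1 1 : ℚ) * xα
            + ((γ : Matrix (Fin 2) (Fin 2) ℤ) 0 1 : ℚ) * yα)
          (((γ : Matrix (Fin 2) (Fin 2) ℤ) 1 0 : ℚ) * xα
            + ((γ : Matrix (Fin 2) (Fin 2) ℤ) 0 0 : ℚ) * yα) τ :=
  eisG_modular_general m xα yα τ γ
end

section
/- For every integer m ≥ 3 and all rational numbers x_α, y_α, the Eisenstein series G_{m,α}(τ) tends to −(−2πi)^m · B_m({y_α})/m! as Im τ → ∞, where B_m is the m-th Bernoulli polynomial and {y_α} ∈ [0,1) denotes the fractional part of y_α. -/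
open Complex Filter

/-! Write `e(t) = exp(2πit)`. The terms with `k = 0` do not depend on `τ` and sum to
`∑_{ℓ ≠ 0} e(-ℓ y_α)/ℓ^m`, which is the Fourier expansion of the periodic Bernoulli function
`-(-2πi)^m B_m({y_α})/m!`; every term with `k ≠ 0` tends to `0`, since `|kτ + ℓ| ≥ Im τ`.
The shear `(k, ℓ) ↦ (k, ℓ - n k)` shows that `G_{m,α}` has period `den y_α`, so it suffices to
let `Im τ → ∞` inside a vertical strip, where the terms are dominated by a summable majorant
independent of `τ`, and Tannery's theorem applies. -/

open UpperHalfPlane hiding I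
open EisensteinSeries
open scoped Real Nat Topology

lemma im_le_norm_intCast_mul_add {k : ℤ} (hk : k ≠ 0) (ℓ : ℤ) (τ : ℍ) :
    τ.im ≤ ‖(k : ℂ) * τ + ℓ‖ := calc
  τ.im ≤ |(k : ℝ)| * τ.im :=
    le_mul_of_one_le_left τ.im_pos.le (by exact_mod_cast Int.one_le_abs hk)
  _ = |((k : ℂ) * τ + ℓ).im| := by simp [abs_mul, abs_of_pos τ.im_pos]
  _ ≤ ‖(k : ℂ) * τ + ℓ‖ := abs_im_le_norm _

lemma summable_norm_vecCons_rpow {k : ℝ} (hk : 2 < k) :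
    Summable fun p : ℤ × ℤ => ‖![p.1, p.2]‖ ^ (-k) :=
  (summable_one_div_norm_rpow hk).comp_injective (finTwoArrowEquiv ℤ).symm.injective

lemma bernoulliFun_ratCast (k : ℕ) (q : ℚ) :
    bernoulliFun k q = ((Polynomial.bernoulli k).eval q : ℚ) := by
  rw [bernoulliFun, Polynomial.eval_map_algebraMap, ← eq_ratCast (algebraMap ℚ ℝ),
    Polynomial.aeval_algebraMap_apply_eq_algebraMap_eval, eq_ratCast]

lemma hasSum_cexp_neg_mul_div_pow {k : ℕ} (hk : 2 ≤ k) (y : ℝ) :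
    HasSum (fun n : ℤ => Complex.exp (-(2 * π * I * n * y)) / (n : ℂ) ^ k)
      (-(-(2 * π * I)) ^ k / k ! * bernoulliFun k (Int.fract y)) := by
  have hfract : ((Int.fract y : ℝ) : UnitAddCircle) = y := by
    rw [QuotientAddGroup.eq_iff_sub_mem, AddSubgroup.mem_zmultiples_iff]
    exact ⟨-⌊y⌋, by simp [Int.fract_sub_self]⟩
  have hterm (n : ℤ) : (-1) ^ k *
      (1 / ((-n : ℤ) : ℂ) ^ k * fourier (-n) ((Int.fract y : ℝ) : UnitAddCircle)) =
        Complex.exp (-(2 * π * I * n * y)) / (n : ℂ) ^ k := by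
    have hsign : ((-1 : ℂ) ^ k) * ((-1) ^ k)⁻¹ = 1 := mul_inv_cancel₀ (by simp)
    rw [hfract, fourier_coe_apply, Int.cast_neg, neg_pow (n : ℂ)]
    push_cast
    rw [div_one, mul_neg, neg_mul]
    linear_combination (Complex.exp (-(2 * π * I * n * y)) / (n : ℂ) ^ k) * hsign
  have h := ((Equiv.neg ℤ).hasSum_iff.mpr
    (hasSum_one_div_pow_mul_fourier_mul_bernoulliFun hk
      ⟨Int.fract_nonneg y, (Int.fract_lt_one y).le⟩)).mul_left ((-1) ^ k)
  simp only [Function.comp_apply, Equiv.neg_apply, hterm] at h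
  have hval : -(-(2 * π * I)) ^ k / k ! * (bernoulliFun k (Int.fract y) : ℂ) =
      (-1) ^ k * (-(2 * π * I) ^ k / k ! * bernoulliFun k (Int.fract y)) := by
    rw [neg_pow (2 * π * I)]
    ring
  rwa [hval]

lemma tendsto_atImInfty_of_periodic {α : Type*} {f : ℍ → α} {l : Filter α} {N : ℕ} (hN : 0 < N)
    (hf : ∀ (n : ℤ) (τ : ℍ), f (((N * n : ℤ) : ℝ) +ᵥ τ) = f τ)
    (h : Tendsto f (atImInfty ⊓ 𝓟 {τ | |τ.re| ≤ N}) l) : Tendsto f atImInfty l := by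
  intro s hs
  obtain ⟨A, hA⟩ := (atImInfty_mem _).1 (mem_inf_principal.1 (h hs))
  refine (atImInfty_mem _).2 ⟨A, fun τ hτ => ?_⟩
  obtain ⟨n, hn⟩ := ModularGroup_T_zpow_mem_verticalStrip τ hN
  rw [modular_T_zpow_smul] at hn
  have := hA _ (by simpa using hτ) hn.1
  rwa [Set.mem_preimage, hf] at this

noncomputable def eisGTerm (m : ℕ) (xα yα : ℚ) (τ : ℍ) (p : ℤ × ℤ) : ℂ :=
  Complex.exp (2 * π * I * ((p.1 : ℂ) * (xα : ℂ) - (p.2 : ℂ) * (yα : ℂ))) /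
    ((p.1 : ℂ) * (τ : ℂ) + (p.2 : ℂ)) ^ m

noncomputable def eisGConstTerm (m : ℕ) (yα : ℚ) (p : ℤ × ℤ) : ℂ :=
  if p.1 = 0 then Complex.exp (-(2 * π * I * p.2 * yα)) / (p.2 : ℂ) ^ m else 0

lemma hasSum_eisGConstTerm {m : ℕ} (hm : 2 ≤ m) (yα : ℚ) :
    HasSum (eisGConstTerm m yα) (-((-(2 * π * I)) ^ m *
      (((Polynomial.bernoulli m).eval (Int.fract yα) : ℚ) : ℂ) / m !)) := by
  have hinj : Function.Injective fun ℓ : ℤ => ((0 : ℤ), ℓ) := fun _ _ h => (Prod.mk.inj h).2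
  rw [← hinj.hasSum_iff]
  · convert hasSum_cexp_neg_mul_div_pow hm (yα : ℝ) using 1
    · ext ℓ
      simp [eisGConstTerm]
    · rw [← Rat.cast_fract, bernoulliFun_ratCast]
      push_cast
      ring
  · rintro ⟨k, ℓ⟩ hp
    exact if_neg fun hk : k = 0 => hp ⟨ℓ, by rw [hk]⟩

section

variable {m : ℕ} {xα yα : ℚ}

-- `0 ^ m = 0` and division by zero is zero, so the excluded term may be put back.
lemma eisGTerm_zero (hm : m ≠ 0) (τ : ℍ) : eisGTerm m xα yα τ 0 = 0 := by
  simp [eisGTerm, hm]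

lemma eisG_eq_tsum_eisGTerm (hm : m ≠ 0) (τ : ℍ) :
    eisG m xα yα τ = ∑' p, eisGTerm m xα yα τ p :=
  tsum_subtype_eq_of_support_subset (f := eisGTerm m xα yα τ) (s := {p | p ≠ 0})
    fun _ hp h => hp (h ▸ eisGTerm_zero hm τ)

lemma norm_eisGTerm (τ : ℍ) (p : ℤ × ℤ) :
    ‖eisGTerm m xα yα τ p‖ = ‖(p.1 : ℂ) * τ + p.2‖⁻¹ ^ m := by
  simp [eisGTerm, Complex.norm_exp]

lemma norm_eisGTerm_le_of_mem_verticalStrip {A B : ℝ} (hB : 0 < B) {τ : ℍ}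
    (hτ : τ ∈ verticalStrip A B) (p : ℤ × ℤ) :
    ‖eisGTerm m xα yα τ p‖ ≤ r ⟨⟨A, B⟩, hB⟩ ^ (-(m : ℝ)) * ‖![p.1, p.2]‖ ^ (-(m : ℝ)) := by
  simpa [norm_eisGTerm, Real.rpow_neg, inv_pow] using
    summand_bound_of_mem_verticalStrip m.cast_nonneg ![p.1, p.2] hB hτ

lemma tendsto_eisGTerm_of_fst_ne_zero (hm : m ≠ 0) {p : ℤ × ℤ} (hp : p.1 ≠ 0) :
    Tendsto (eisGTerm m xα yα · p) atImInfty (𝓝 0) := by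
  have him : Tendsto (fun τ : ℍ => τ.im⁻¹ ^ m) atImInfty (𝓝 0) := by
    rw [← zero_pow hm]
    exact (tendsto_inv_atTop_zero.comp tendsto_comap).pow m
  refine squeeze_zero_norm (fun τ => ?_) him
  rw [norm_eisGTerm]
  gcongr
  exact im_le_norm_intCast_mul_add hp p.2 τ

lemma eisGTerm_fst_eq_zero (τ : ℍ) (ℓ : ℤ) :
    eisGTerm m xα yα τ (0, ℓ) = Complex.exp (-(2 * π * I * ℓ * yα)) / (ℓ : ℂ) ^ m := by
  simp only [eisGTerm]
  push_cast
  ring_nf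

lemma tendsto_eisGTerm_atImInfty (hm : m ≠ 0) (p : ℤ × ℤ) :
    Tendsto (eisGTerm m xα yα · p) atImInfty (𝓝 (eisGConstTerm m yα p)) := by
  obtain ⟨k, ℓ⟩ := p
  by_cases hk : k = 0
  · subst hk
    simpa only [eisGConstTerm, if_pos, eisGTerm_fst_eq_zero] using tendsto_const_nhds
  · simpa [eisGConstTerm, hk] using tendsto_eisGTerm_of_fst_ne_zero hm hk

lemma eisGTerm_intCast_vadd (n : ℤ) (τ : ℍ) (p : ℤ × ℤ) :
    eisGTerm m xα yα ((n : ℝ) +ᵥ τ) (p.1, p.2 - n * p.1) = eisGTerm m (xα + n * yα) yα τ p := by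
  simp only [eisGTerm, coe_vadd]
  push_cast
  ring_nf

lemma eisG_intCast_vadd (hm : m ≠ 0) (n : ℤ) (τ : ℍ) :
    eisG m xα yα ((n : ℝ) +ᵥ τ) = eisG m (xα + n * yα) yα τ := by
  let shear : ℤ × ℤ ≃ ℤ × ℤ := (Equiv.refl ℤ).prodShear fun k => Equiv.subRight (n * k)
  rw [eisG_eq_tsum_eisGTerm hm, eisG_eq_tsum_eisGTerm hm, ← shear.tsum_eq]
  exact tsum_congr (eisGTerm_intCast_vadd n τ)

lemma eisG_add_intCast (j : ℤ) (τ : ℍ) : eisG m (xα + j) yα τ = eisG m xα yα τ := by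
  refine tsum_congr fun p => congrArg (· / _) ?_
  rw [Complex.exp_eq_exp_iff_exists_int]
  exact ⟨p.1.1 * j, by push_cast; ring⟩

lemma eisG_den_mul_vadd (hm : m ≠ 0) (n : ℤ) (τ : ℍ) :
    eisG m xα yα (((yα.den * n : ℤ) : ℝ) +ᵥ τ) = eisG m xα yα τ := by
  have hshift : ((yα.den * n : ℤ) : ℚ) * yα = (n * yα.num : ℤ) := by
    push_cast
    rw [← Rat.mul_den_eq_num]
    ring
  rw [eisG_intCast_vadd hm, hshift, eisG_add_intCast]

end

/-- For `m ≥ 3`, `G_{m,α}(τ) → −(−2πi)^m B_m({y_α})/m!` as `Im τ → ∞`, where `B_m` is the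
`m`-th Bernoulli polynomial and `{y_α}` is the fractional part of `y_α`. -/
theorem eisG_tendsto_atImInfty (m : ℕ) (hm : 3 ≤ m) (xα yα : ℚ) :
    Tendsto (fun τ : UpperHalfPlane => eisG m xα yα τ) UpperHalfPlane.atImInfty
      (nhds (-((-(2 * Real.pi * I)) ^ m *
        (((Polynomial.bernoulli m).eval (Int.fract yα) : ℚ) : ℂ) / (Nat.factorial m : ℂ)))) := by
  have hm0 : m ≠ 0 := by omega
  refine tendsto_atImInfty_of_periodic yα.den_pos (eisG_den_mul_vadd hm0) ?_
  simp_rw [eisG_eq_tsum_eisGTerm hm0, ← (hasSum_eisGConstTerm (by omega : 2 ≤ m) yα).tsum_eq]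
  have hstrip : ∀ᶠ τ in atImInfty ⊓ 𝓟 {τ | |τ.re| ≤ yα.den}, τ ∈ verticalStrip yα.den 1 :=
    eventually_inf_principal.2 <| (atImInfty_mem _).2 ⟨1, fun _ him hre => ⟨hre, him⟩⟩
  refine tendsto_tsum_of_dominated_convergence
    ((summable_norm_vecCons_rpow (k := m) (by exact_mod_cast hm)).mul_left
      (r ⟨⟨yα.den, 1⟩, one_pos⟩ ^ (-(m : ℝ))))
    (fun p => (tendsto_eisGTerm_atImInfty hm0 p).mono_left inf_le_left) ?_
  filter_upwards [hstrip] with τ hτ p using norm_eisGTerm_le_of_mem_verticalStrip one_pos hτ p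
end

section
/- Let N ≥ 1 and let L be the free Lie algebra over ℚ on the generators X, Y, and t_β for β ranging over (ℤ/Nℤ)². Then for every α ∈ (ℤ/Nℤ)² and every integer m ≥ 0, the identity [X, ∑_{j+k = m−1, j,k ≥ 0} ∑_{β ∈ (ℤ/Nℤ)²} (−1)^j · [(ad X)^j(t_β), (ad X)^k(t_{α+β})]] = ∑_{β ∈ (ℤ/Nℤ)²} [t_β, (ad X)^m(t_{β+α}) + (−1)^m·(ad X)^m(t_{β−α})] holds in L. (This is the verification that the derivation δ_{m,α}, which annihilates X, sends Y to the inner sum on the left, and sends t_β to the β-summand on the right, satisfies δ_{m,α}([X,Y]) = ∑_β δ_{m,α}(t_β), so that it descends to the quotient Lie algebra 𝔭_N.) -/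
open FreeLieAlgebra

/-- Generators `X`, `Y`, `t_β` (for `β ∈ (ℤ/Nℤ)²`) of the free Lie algebra `L`. -/
inductive KZBGen (N : ℕ) where
  | X : KZBGen N
  | Y : KZBGen N
  | t : ZMod N × ZMod N → KZBGen N

/-!
Since `ad X` is a derivation, applying it to `(-1)^j [(ad X)^j u, (ad X)^(m-1-j) v]` gives
`g j - g (j+1)` with `g j = (-1)^j [(ad X)^j u, (ad X)^(m-j) v]`, so the left-hand side telescopes
to `[u, (ad X)^m v] - (-1)^m [(ad X)^m u, v]` for `u = t_β`, `v = t_{α+β}`. Summing over `β`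
and shifting `β ↦ β - α` in the second term gives the right-hand side.
-/

section AdPow

variable {R L : Type*} [CommRing R] [LieRing L] [LieAlgebra R L]

theorem lie_ad_pow_lie_ad_pow (x u v : L) (j k : ℕ) :
    ⁅x, ⁅(LieAlgebra.ad R L x ^ j) u, (LieAlgebra.ad R L x ^ k) v⁆⁆ =
      ⁅(LieAlgebra.ad R L x ^ (j + 1)) u, (LieAlgebra.ad R L x ^ k) v⁆ +
        ⁅(LieAlgebra.ad R L x ^ j) u, (LieAlgebra.ad R L x ^ (k + 1)) v⁆ := by
  rw [pow_succ', pow_succ', Module.End.mul_apply, Module.End.mul_apply]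
  exact leibniz_lie x _ _

theorem lie_sum_range_neg_one_pow_smul_lie_ad_pow (x u v : L) (m : ℕ) :
    ⁅x, ∑ j ∈ Finset.range m, ((-1 : R) ^ j) •
        ⁅(LieAlgebra.ad R L x ^ j) u, (LieAlgebra.ad R L x ^ (m - 1 - j)) v⁆⁆ =
      ⁅u, (LieAlgebra.ad R L x ^ m) v⁆ - ((-1 : R) ^ m) • ⁅(LieAlgebra.ad R L x ^ m) u, v⁆ := by
  set g : ℕ → L := fun j =>
    ((-1 : R) ^ j) • ⁅(LieAlgebra.ad R L x ^ j) u, (LieAlgebra.ad R L x ^ (m - j)) v⁆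
  have telescope : ∀ j ∈ Finset.range m,
      ⁅x, ((-1 : R) ^ j) •
        ⁅(LieAlgebra.ad R L x ^ j) u, (LieAlgebra.ad R L x ^ (m - 1 - j)) v⁆⁆ = g j - g (j + 1) := by
    intro j hj
    have hk : m - j = m - 1 - j + 1 := by grind
    have hk' : m - (j + 1) = m - 1 - j := by omega
    simp only [g, hk, hk', lie_smul, lie_ad_pow_lie_ad_pow, pow_succ, mul_neg_one, neg_smul,
      smul_add]
    abel
  rw [lie_sum, Finset.sum_congr rfl telescope, Finset.sum_range_sub']
  simp [g]

end AdPow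

theorem Fintype.sum_lie_add_eq_neg_sum_lie_sub {G L : Type*} [AddGroup G] [Fintype G]
    [LieRing L] (f g : G → L) (α : G) :
    ∑ β, ⁅f β, g (β + α)⁆ = -∑ β, ⁅g β, f (β - α)⁆ := by
  rw [← Finset.sum_neg_distrib, ← (Equiv.subRight α).sum_comp]
  simp

/-- The verification that the derivation `δ_{m,α}` is well defined on `𝔭_N`: in the free
Lie algebra over `ℚ` on `X`, `Y`, `t_β` (`β ∈ (ℤ/Nℤ)²`), for every `α` and `m ≥ 0`,
`[X, ∑_{j+k=m−1} ∑_β (−1)^j [(ad X)^j t_β, (ad X)^k t_{α+β}]]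
  = ∑_β [t_β, (ad X)^m t_{β+α} + (−1)^m (ad X)^m t_{β−α}]`. -/
theorem deltaWellDefined (N : ℕ) [NeZero N] (α : ZMod N × ZMod N) (m : ℕ) :
    ⁅of ℚ (KZBGen.X : KZBGen N),
      ∑ j ∈ Finset.range m, ∑ β : ZMod N × ZMod N,
        ((-1 : ℚ) ^ j) •
          ⁅((LieAlgebra.ad ℚ (FreeLieAlgebra ℚ (KZBGen N)) (of ℚ KZBGen.X)) ^ j)
              (of ℚ (KZBGen.t β)),
            ((LieAlgebra.ad ℚ (FreeLieAlgebra ℚ (KZBGen N)) (of ℚ KZBGen.X)) ^ (m - 1 - j))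
              (of ℚ (KZBGen.t (α + β)))⁆⁆
      = ∑ β : ZMod N × ZMod N,
          ⁅of ℚ (KZBGen.t β),
            ((LieAlgebra.ad ℚ (FreeLieAlgebra ℚ (KZBGen N)) (of ℚ KZBGen.X)) ^ m)
                (of ℚ (KZBGen.t (β + α)))
              + ((-1 : ℚ) ^ m) •
                ((LieAlgebra.ad ℚ (FreeLieAlgebra ℚ (KZBGen N)) (of ℚ KZBGen.X)) ^ m)
                  (of ℚ (KZBGen.t (β - α)))⁆ := by
  rw [Finset.sum_comm, lie_sum]
  simp only [add_comm α, lie_sum_range_neg_one_pow_smul_lie_ad_pow, Finset.sum_sub_distrib,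
    ← Finset.smul_sum, lie_add, lie_smul, Finset.sum_add_distrib]
  rw [Fintype.sum_lie_add_eq_neg_sum_lie_sub _ (fun β ↦ of ℚ (KZBGen.t β)), smul_neg,
    sub_neg_eq_add]
end

section
/- Let n ≥ 1 and let A : ℝ → M_n(ℂ) be a continuous matrix-valued function on [0,1]. Let T : ℝ → M_n(ℂ) satisfy T(0) = I and T'(t) = −A(t)·T(t) for t ∈ [0,1]. Then T(1) is invertible and T(1)^{−1} = ∑_{m=0}^∞ ∫_{0 ≤ t₁ ≤ ⋯ ≤ t_m ≤ 1} A(t₁)·A(t₂)⋯A(t_m) dt₁⋯dt_m, where the m = 0 term is the identity matrix and the series converges in M_n(ℂ). (Chen's formula: the inverse parallel transport of the connection d + A(t)dt along [0,1] is the sum of the iterated integrals of A.) -/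
/-!
Write `I_m = iterInt A m` and `S_N = ∑_{m ≤ N} I_m`. Since `I_{m+1}' = I_m A` and `T' = -A T`,
the derivative of `S_N T` telescopes to `-I_N A T`, so `S_N(1) T(1) = 1 - ∫₀¹ I_N A T`.
The factorial bound `‖I_N(s)‖ ≤ ‖1‖ (M s)^N / N!`, with `M` a bound for `‖A‖`, makes the series
converge and the remainder vanish. Hence `(∑ I_m(1)) T(1) = 1`, and a left inverse of a square
matrix is its inverse.
-/

open Complex MeasureTheory intervalIntegral

attribute [local instance] Matrix.linftyOpNormedAddCommGroup Matrix.linftyOpNormedSpace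
  Matrix.linftyOpNormedRing Matrix.linftyOpNormedAlgebra

/-- The iterated integral `∫_{0 ≤ t₁ ≤ ⋯ ≤ t_m ≤ s} A(t₁)⋯A(t_m) dt₁⋯dt_m`, defined
recursively: the `m = 0` term is the identity matrix, and
`I_{m+1}(s) = ∫_0^s I_m(t)·A(t) dt`. -/
noncomputable def iterInt {n : ℕ} (A : ℝ → Matrix (Fin n) (Fin n) ℂ) :
    ℕ → ℝ → Matrix (Fin n) (Fin n) ℂ
  | 0, _ => 1
  | m + 1, s => ∫ t in (0 : ℝ)..s, iterInt A m t * A t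

open Set Filter Topology
open scoped Nat

section IteratedIntegrals

variable {n : ℕ} {A : ℝ → Matrix (Fin n) (Fin n) ℂ} {b : ℝ}

-- The norm induces the product topology, but instance search does not unfold `Matrix`.
local instance : TopologicalSpace.PseudoMetrizableSpace (Matrix (Fin n) (Fin n) ℂ) :=
  inferInstanceAs (TopologicalSpace.PseudoMetrizableSpace (Fin n → Fin n → ℂ))

@[simp]
lemma iterInt_zero (A : ℝ → Matrix (Fin n) (Fin n) ℂ) (s : ℝ) : iterInt A 0 s = 1 := rfl

@[simp]
lemma iterInt_succ_apply_zero (A : ℝ → Matrix (Fin n) (Fin n) ℂ) (m : ℕ) :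
    iterInt A (m + 1) 0 = 0 :=
  integral_same

lemma sum_range_iterInt_apply_zero (A : ℝ → Matrix (Fin n) (Fin n) ℂ) (N : ℕ) :
    ∑ m ∈ Finset.range (N + 1), iterInt A m 0 = 1 := by
  simp [Finset.sum_range_succ']

lemma continuousOn_iterInt (hA : ContinuousOn A (Icc 0 b)) (m : ℕ) :
    ContinuousOn (iterInt A m) (Icc 0 b) := by
  induction m with
  | zero => exact continuousOn_const
  | succ m ih =>
    rcases lt_or_ge b 0 with hb | hb
    · simp [Icc_eq_empty_of_lt hb]
    rw [← uIcc_of_le hb] at hA ih ⊢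
    exact continuousOn_primitive_interval ((ih.mul hA).integrableOn_compact isCompact_uIcc)

lemma hasDerivAt_iterInt_succ (hA : ContinuousOn A (Icc 0 b)) (m : ℕ) {t : ℝ}
    (ht : t ∈ Ioo 0 b) : HasDerivAt (iterInt A (m + 1)) (iterInt A m t * A t) t := by
  have hcont : ContinuousOn (fun s => iterInt A m s * A s) (Icc 0 b) :=
    (continuousOn_iterInt hA m).mul hA
  have h0 : (0 : ℝ) ∈ Icc 0 b := left_mem_Icc.2 (ht.1.le.trans ht.2.le)
  exact integral_hasDerivAt_right
    (hcont.mono (uIcc_subset_Icc h0 (Ioo_subset_Icc_self ht))).intervalIntegrable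
    ((hcont.mono Ioo_subset_Icc_self).stronglyMeasurableAtFilter isOpen_Ioo t ht)
    (hcont.continuousAt (Icc_mem_nhds ht.1 ht.2))

lemma hasDerivAt_sum_iterInt (hA : ContinuousOn A (Icc 0 b)) {t : ℝ} (ht : t ∈ Ioo 0 b)
    (N : ℕ) :
    HasDerivAt (fun s => ∑ m ∈ Finset.range (N + 1), iterInt A m s)
      (∑ m ∈ Finset.range N, iterInt A m t * A t) t := by
  have h := (HasDerivAt.fun_sum (u := Finset.range N)
    fun m _ => hasDerivAt_iterInt_succ hA m ht).add_const 1
  simp only [Finset.sum_range_succ', iterInt_zero]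
  exact h

lemma hasDerivAt_sum_iterInt_mul {T : ℝ → Matrix (Fin n) (Fin n) ℂ}
    (hA : ContinuousOn A (Icc 0 b)) {t : ℝ} (ht : t ∈ Ioo 0 b)
    (hT : HasDerivAt T (-(A t) * T t) t) (N : ℕ) :
    HasDerivAt (fun s => (∑ m ∈ Finset.range (N + 1), iterInt A m s) * T s)
      (-(iterInt A N t * (A t * T t))) t := by
  refine ((hasDerivAt_sum_iterInt hA ht N).mul hT).congr_deriv ?_
  rw [Finset.sum_range_succ, ← Finset.sum_mul]
  noncomm_ring

lemma sum_iterInt_mul_eq_one_sub {T : ℝ → Matrix (Fin n) (Fin n) ℂ}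
    (hA : ContinuousOn A (Icc 0 b)) (hb : 0 ≤ b) (hTc : ContinuousOn T (Icc 0 b))
    (hT0 : T 0 = 1) (hT : ∀ t ∈ Ioo 0 b, HasDerivAt T (-(A t) * T t) t) (N : ℕ) :
    (∑ m ∈ Finset.range (N + 1), iterInt A m b) * T b =
      1 - ∫ t in (0 : ℝ)..b, iterInt A N t * (A t * T t) := by
  have hcont : ContinuousOn (fun t => iterInt A N t * (A t * T t)) (uIcc 0 b) := by
    rw [uIcc_of_le hb]
    exact (continuousOn_iterInt hA N).mul (hA.mul hTc)
  have hftc := integral_eq_sub_of_hasDerivAt_of_le hb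
    ((continuousOn_finsetSum _ fun m _ => continuousOn_iterInt hA m).mul hTc)
    (fun t ht => hasDerivAt_sum_iterInt_mul hA ht (hT t ht) N) hcont.neg.intervalIntegrable
  simp only [Pi.mul_apply] at hftc
  rw [intervalIntegral.integral_neg, sum_range_iterInt_apply_zero, hT0, one_mul] at hftc
  rw [sub_eq_add_neg, hftc]
  abel

lemma norm_iterInt_le {M : ℝ} (hM : ∀ t ∈ Icc 0 b, ‖A t‖ ≤ M) (m : ℕ) {s : ℝ}
    (hs : s ∈ Icc 0 b) :
    ‖iterInt A m s‖ ≤ ‖(1 : Matrix (Fin n) (Fin n) ℂ)‖ * (M * s) ^ m / m ! := by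
  induction m generalizing s with
  | zero => simp
  | succ m ih =>
    set C := ‖(1 : Matrix (Fin n) (Fin n) ℂ)‖
    calc ‖iterInt A (m + 1) s‖ ≤ ∫ t in (0 : ℝ)..s, C * M ^ (m + 1) / m ! * t ^ m := by
          refine norm_integral_le_of_norm_le hs.1 (ae_of_all _ fun t ht => ?_)
            ((continuous_const.mul (continuous_pow m)).intervalIntegrable _ _)
          have ht' : t ∈ Icc 0 b := ⟨ht.1.le, ht.2.trans hs.2⟩
          calc ‖iterInt A m t * A t‖ ≤ ‖iterInt A m t‖ * ‖A t‖ := norm_mul_le _ _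
            _ ≤ C * (M * t) ^ m / m ! * M :=
              mul_le_mul (ih ht') (hM t ht') (norm_nonneg _) ((norm_nonneg _).trans (ih ht'))
            _ = C * M ^ (m + 1) / m ! * t ^ m := by ring
      _ = C * (M * s) ^ (m + 1) / (m + 1)! := by
          rw [intervalIntegral.integral_const_mul, integral_pow, Nat.factorial_succ]
          push_cast
          field_simp
          ring

lemma exists_norm_iterInt_le (hA : ContinuousOn A (Icc 0 b)) :
    ∃ M, ∀ m, ∀ s ∈ Icc 0 b,
      ‖iterInt A m s‖ ≤ ‖(1 : Matrix (Fin n) (Fin n) ℂ)‖ * M ^ m / m ! := by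
  obtain ⟨M, hM⟩ := isCompact_Icc.exists_bound_of_continuousOn hA
  refine ⟨M * b, fun m s hs => (norm_iterInt_le hM m hs).trans ?_⟩
  have hM0 : 0 ≤ M := (norm_nonneg _).trans (hM 0 (left_mem_Icc.2 (hs.1.trans hs.2)))
  have hpow : (M * s) ^ m ≤ (M * b) ^ m :=
    pow_le_pow_left₀ (mul_nonneg hM0 hs.1) (mul_le_mul_of_nonneg_left hs.2 hM0) m
  gcongr

lemma summable_iterInt (hA : ContinuousOn A (Icc 0 b)) (hb : 0 ≤ b) :
    Summable fun m => iterInt A m b := by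
  obtain ⟨M, hM⟩ := exists_norm_iterInt_le hA
  refine .of_norm_bounded ((Real.summable_pow_div_factorial M).mul_left
    ‖(1 : Matrix (Fin n) (Fin n) ℂ)‖) fun m => ?_
  simpa only [mul_div_assoc] using hM m b (right_mem_Icc.2 hb)

lemma tendsto_integral_iterInt_mul_nhds_zero {G : ℝ → Matrix (Fin n) (Fin n) ℂ}
    (hA : ContinuousOn A (Icc 0 b)) (hG : ContinuousOn G (Icc 0 b)) (hb : 0 ≤ b) :
    Tendsto (fun N => ∫ t in (0 : ℝ)..b, iterInt A N t * G t) atTop (𝓝 0) := by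
  obtain ⟨M, hM⟩ := exists_norm_iterInt_le hA
  obtain ⟨K, hK⟩ := isCompact_Icc.exists_bound_of_continuousOn hG
  set C := ‖(1 : Matrix (Fin n) (Fin n) ℂ)‖
  have hlim := (FloorSemiring.tendsto_pow_div_factorial_atTop M).const_mul (C * K * b)
  rw [mul_zero] at hlim
  refine squeeze_zero_norm (fun N => ?_) hlim
  have hbound : ∀ t ∈ uIoc 0 b, ‖iterInt A N t * G t‖ ≤ C * M ^ N / N ! * K := by
    intro t ht
    rw [uIoc_of_le hb] at ht
    have ht' : t ∈ Icc 0 b := Ioc_subset_Icc_self ht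
    exact (norm_mul_le _ _).trans
      (mul_le_mul (hM N t ht') (hK t ht') (norm_nonneg _) ((norm_nonneg _).trans (hM N t ht')))
  refine (norm_integral_le_of_norm_le_const hbound).trans_eq ?_
  rw [sub_zero, abs_of_nonneg hb]
  ring

lemma tsum_iterInt_mul_eq_one {T : ℝ → Matrix (Fin n) (Fin n) ℂ}
    (hA : ContinuousOn A (Icc 0 b)) (hb : 0 ≤ b) (hTc : ContinuousOn T (Icc 0 b))
    (hT0 : T 0 = 1) (hT : ∀ t ∈ Ioo 0 b, HasDerivAt T (-(A t) * T t) t) :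
    (∑' m, iterInt A m b) * T b = 1 := by
  have hsum : Tendsto (fun N => (∑ m ∈ Finset.range (N + 1), iterInt A m b) * T b) atTop
      (𝓝 ((∑' m, iterInt A m b) * T b)) :=
    ((summable_iterInt hA hb).hasSum.tendsto_sum_nat.comp (tendsto_add_atTop_nat 1)).mul_const _
  have hone : Tendsto (fun N => (∑ m ∈ Finset.range (N + 1), iterInt A m b) * T b) atTop
      (𝓝 1) := by
    simp_rw [sum_iterInt_mul_eq_one_sub hA hb hTc hT0 hT]
    simpa using (tendsto_integral_iterInt_mul_nhds_zero hA (hA.mul hTc) hb).const_sub 1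
  exact tendsto_nhds_unique hsum hone

end IteratedIntegrals

theorem chen_formula_general (n : ℕ) (A T : ℝ → Matrix (Fin n) (Fin n) ℂ)
    (hA : ContinuousOn A (Set.Icc 0 1))
    (hT0 : T 0 = 1)
    (hT : ∀ t ∈ Set.Icc (0 : ℝ) 1, HasDerivAt T (-(A t) * T t) t) :
    Summable (fun m : ℕ => iterInt A m 1) ∧ IsUnit (T 1) ∧
      (T 1)⁻¹ = ∑' m : ℕ, iterInt A m 1 := by
  have hTc : ContinuousOn T (Icc 0 1) := fun t ht => (hT t ht).continuousAt.continuousWithinAt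
  have hinv : (∑' m, iterInt A m 1) * T 1 = 1 :=
    tsum_iterInt_mul_eq_one hA zero_le_one hTc hT0 fun t ht => hT t (Ioo_subset_Icc_self ht)
  exact ⟨summable_iterInt hA zero_le_one, .of_mul_eq_one_right _ hinv,
    Matrix.inv_eq_left_inv hinv⟩

/-- Chen's formula: if `A : [0,1] → Mₙ(ℂ)` is continuous and `T` solves the parallel
transport equation `T(0) = I`, `T'(t) = −A(t)T(t)` on `[0,1]`, then the series of iterated
integrals `∑_m ∫_{0 ≤ t₁ ≤ ⋯ ≤ t_m ≤ 1} A(t₁)⋯A(t_m)` converges, `T(1)` is invertible, and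
its inverse is the sum of that series. -/
theorem chen_formula (n : ℕ) (hn : 1 ≤ n) (A T : ℝ → Matrix (Fin n) (Fin n) ℂ)
    (hA : ContinuousOn A (Set.Icc 0 1))
    (hT0 : T 0 = 1)
    (hT : ∀ t ∈ Set.Icc (0 : ℝ) 1, HasDerivAt T (-(A t) * T t) t) :
    Summable (fun m : ℕ => iterInt A m 1) ∧ IsUnit (T 1) ∧
      (T 1)⁻¹ = ∑' m : ℕ, iterInt A m 1 :=
  chen_formula_general n A T hA hT0 hT
end

section
/- Let m ≥ 3 be an integer, N ≥ 1, x_α a rational with N·x_α ∈ ℤ, ζ = e^{2πi x_α}, and γ = [[a,b],[c,d]] ∈ SL₂(ℤ). Then the function τ ↦ (cτ+d)^{−m} · G_{m,ζ}((aτ+b)/(cτ+d)) tends to ∑_{k ∈ ℤ ∖ {0}} ζ^{−ck}/k^m as Im τ → ∞. -/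
open Complex Filter
open scoped MatrixGroups

/-- The `Γ₁(N)` Eisenstein series `G_{m,ζ}(τ) = ∑_{(k,ℓ) ≠ (0,0)} ζ^k/(kτ+ℓ)^m`. -/
noncomputable def eisGzeta (m : ℕ) (ζ : ℂ) (τ : UpperHalfPlane) : ℂ :=
  ∑' p : {p : ℤ × ℤ // p ≠ 0},
    ζ ^ (p.1.1) / ((p.1.1 : ℂ) * (τ : ℂ) + (p.1.2 : ℂ)) ^ m

/-! Substituting `(k, ℓ) ↦ (k, ℓ) γ` in the lattice sum turns `(cτ + d)^{-m} G_{m,ζ}(γτ)` into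
`∑ ζ^{kd - ℓc} / (kτ + ℓ)^m`. As `Im τ → ∞` its terms with `k ≠ 0` tend to `0` and the others are
constant; on a vertical strip all terms are bounded by a multiple of `‖(k, ℓ)‖^{-m}`, which is
summable for `m > 2`, so dominated convergence applies there. Since `ζ^N = 1` the sum is invariant
under `τ ↦ τ + N`, and every point of `ℍ` is such a translate of a point of a strip of width `N`. -/

section

open UpperHalfPlane Topology

noncomputable def latticeSum (m : ℕ) (χ : ℤ × ℤ → ℂ) (τ : ℍ) : ℂ :=
  ∑' p : {p : ℤ × ℤ // p ≠ 0}, χ p / ((p.1.1 : ℂ) * τ + p.1.2) ^ m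

lemma eisGzeta_eq_latticeSum (m : ℕ) (ζ : ℂ) : eisGzeta m ζ = latticeSum m (fun p => ζ ^ p.1) :=
  rfl

lemma SL2_det_eq_one (γ : SL(2,ℤ)) : γ 0 0 * γ 1 1 - γ 0 1 * γ 1 0 = 1 := by
  rw [← Matrix.det_fin_two, Matrix.SpecialLinearGroup.det_coe]

lemma SL2_int_denom_ne_zero (γ : SL(2,ℤ)) (τ : ℍ) : (γ 1 0 : ℂ) * τ + γ 1 1 ≠ 0 := by
  simpa [ModularGroup.denom_apply] using denom_ne_zero γ τ

def rowMulEquiv (γ : SL(2,ℤ)) : ℤ × ℤ ≃ ℤ × ℤ where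
  toFun p := (p.1 * γ 0 0 + p.2 * γ 1 0, p.1 * γ 0 1 + p.2 * γ 1 1)
  invFun q := (q.1 * γ 1 1 - q.2 * γ 1 0, q.2 * γ 0 0 - q.1 * γ 0 1)
  left_inv p := Prod.ext (by linear_combination p.1 * SL2_det_eq_one γ)
    (by linear_combination p.2 * SL2_det_eq_one γ)
  right_inv q := Prod.ext (by linear_combination q.1 * SL2_det_eq_one γ)
    (by linear_combination q.2 * SL2_det_eq_one γ)

lemma rowMulEquiv_symm_apply (γ : SL(2,ℤ)) (q : ℤ × ℤ) :
    (rowMulEquiv γ).symm q = (q.1 * γ 1 1 - q.2 * γ 1 0, q.2 * γ 0 0 - q.1 * γ 0 1) :=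
  rfl

def rowMulEquivNeZero (γ : SL(2,ℤ)) : {p : ℤ × ℤ // p ≠ 0} ≃ {p : ℤ × ℤ // p ≠ 0} :=
  (rowMulEquiv γ).subtypeEquiv fun p =>
    ((rowMulEquiv γ).injective.ne_iff' (by simp [rowMulEquiv])).symm

lemma int_mul_smul_add_int (γ : SL(2,ℤ)) (τ : ℍ) (p : ℤ × ℤ) :
    (p.1 : ℂ) * ↑(γ • τ) + p.2 =
      ((rowMulEquiv γ p).1 * τ + (rowMulEquiv γ p).2) / ((γ 1 0 : ℂ) * τ + γ 1 1) := by
  have hD := SL2_int_denom_ne_zero γ τ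
  simp only [coe_specialLinearGroup_apply, algebraMap_int_eq, eq_intCast, ofReal_intCast,
    rowMulEquiv, Equiv.coe_fn_mk]
  rw [eq_div_iff hD, add_mul, mul_assoc, div_mul_cancel₀ _ hD]
  push_cast
  ring

lemma zpow_neg_mul_div_div_pow {D : ℂ} (hD : D ≠ 0) (m : ℕ) (x W : ℂ) :
    D ^ (-(m : ℤ)) * (x / (W / D) ^ m) = x / W ^ m := by
  rw [zpow_neg, zpow_natCast, div_pow]
  field_simp

lemma latticeSum_smul (m : ℕ) (χ : ℤ × ℤ → ℂ) (γ : SL(2,ℤ)) (τ : ℍ) :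
    ((γ 1 0 : ℂ) * τ + γ 1 1) ^ (-(m : ℤ)) * latticeSum m χ (γ • τ) =
      latticeSum m (χ ∘ (rowMulEquiv γ).symm) τ := by
  rw [latticeSum, latticeSum, ← tsum_mul_left, ← (rowMulEquivNeZero γ).tsum_eq (f := fun p =>
    (χ ∘ (rowMulEquiv γ).symm) p / ((p.1.1 : ℂ) * τ + p.1.2) ^ m)]
  refine tsum_congr fun p => ?_
  simp only [rowMulEquivNeZero, Equiv.subtypeEquiv_apply, Function.comp_apply,
    Equiv.symm_apply_apply, int_mul_smul_add_int,
    zpow_neg_mul_div_div_pow (SL2_int_denom_ne_zero γ τ)]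

lemma latticeSum_T_zpow_smul (m : ℕ) {χ : ℤ × ℤ → ℂ} {k : ℤ}
    (hχ : ∀ p : ℤ × ℤ, χ (p.1, p.2 - p.1 * k) = χ p) (τ : ℍ) :
    latticeSum m χ (ModularGroup.T ^ k • τ) = latticeSum m χ τ := by
  have h := latticeSum_smul m χ (ModularGroup.T ^ k) τ
  have hχ' : χ ∘ (rowMulEquiv (ModularGroup.T ^ k)).symm = χ := funext fun p => by
    simpa [rowMulEquiv_symm_apply, ModularGroup.coe_T_zpow, mul_comm] using hχ p
  simpa [ModularGroup.coe_T_zpow, hχ'] using h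

lemma tendsto_atImInfty_of_T_zpow_invariant {α : Type*} {f : ℍ → α} {l : Filter α} {N : ℕ}
    (hN : 0 < N) (hf : ∀ (n : ℤ) (τ : ℍ), f (ModularGroup.T ^ (N * n) • τ) = f τ)
    (hlim : Tendsto f (atImInfty ⊓ 𝓟 (verticalStrip N 1)) l) :
    Tendsto f atImInfty l := by
  intro s hs
  obtain ⟨A, hA⟩ := (atImInfty_mem _).1 (mem_inf_principal.1 (hlim hs))
  refine (atImInfty_mem _).2 ⟨max A 1, fun τ hτ => ?_⟩
  obtain ⟨n, hn⟩ := ModularGroup_T_zpow_mem_verticalStrip τ hN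
  have him : (ModularGroup.T ^ (N * n) • τ).im = τ.im := by
    rw [modular_T_zpow_smul, vadd_im]
  rw [Set.mem_preimage, ← hf n τ]
  exact hA _ (him ▸ le_of_max_le_left hτ) ⟨hn.1, him ▸ le_of_max_le_right hτ⟩

lemma tendsto_norm_int_mul_add_atImInfty {k : ℤ} (hk : k ≠ 0) (ℓ : ℤ) :
    Tendsto (fun τ : ℍ => ‖(k : ℂ) * τ + ℓ‖) atImInfty atTop := by
  refine tendsto_atTop_mono (fun τ => ?_) tendsto_comap
  calc τ.im ≤ |(k : ℝ)| * τ.im :=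
        le_mul_of_one_le_left τ.im_pos.le (by exact_mod_cast Int.one_le_abs hk)
    _ = |((k : ℂ) * τ + ℓ).im| := by simp [abs_mul, abs_of_pos τ.im_pos]
    _ ≤ ‖(k : ℂ) * τ + ℓ‖ := abs_im_le_norm _

lemma tendsto_div_int_mul_add_pow_atImInfty (c : ℂ) {k : ℤ} (hk : k ≠ 0) (ℓ : ℤ) {m : ℕ}
    (hm : m ≠ 0) : Tendsto (fun τ : ℍ => c / ((k : ℂ) * τ + ℓ) ^ m) atImInfty (𝓝 0) := by
  have h := (((tendsto_pow_atTop hm).comp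
    (tendsto_norm_int_mul_add_atImInfty hk ℓ)).inv_tendsto_atTop).const_mul ‖c‖
  rw [mul_zero] at h
  refine tendsto_zero_iff_norm_tendsto_zero.2 (h.congr fun τ => ?_)
  simp [norm_pow, div_eq_mul_inv]

lemma summable_norm_finTwoArrowEquiv_symm_rpow_neg {s : ℝ} (hs : 2 < s) :
    Summable fun p : {p : ℤ × ℤ // p ≠ 0} => ‖(finTwoArrowEquiv ℤ).symm p‖ ^ (-s) :=
  (EisensteinSeries.summable_one_div_norm_rpow hs).comp_injective
    ((finTwoArrowEquiv ℤ).symm.injective.comp Subtype.val_injective)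

lemma tsum_ite_fst_eq_zero (f : ℤ × ℤ → ℂ) :
    ∑' p : {p : ℤ × ℤ // p ≠ 0}, (if p.1.1 = 0 then f p else 0) =
      ∑' k : {k : ℤ // k ≠ 0}, f (0, k) := by
  have hinj : Function.Injective fun k : {k : ℤ // k ≠ 0} =>
      (⟨(0, k), by simp [k.2]⟩ : {p : ℤ × ℤ // p ≠ 0}) := by
    intro k k' h
    simpa [Subtype.ext_iff] using h
  rw [← hinj.tsum_eq]
  · simp
  · rintro ⟨⟨k, ℓ⟩, hp⟩ hne
    obtain rfl : k = 0 := by by_contra hk; simp [hk] at hne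
    exact ⟨⟨ℓ, by simpa using hp⟩, rfl⟩

lemma tendsto_latticeSum_inf_verticalStrip {m : ℕ} (hm : 3 ≤ m) {χ : ℤ × ℤ → ℂ} {C : ℝ}
    (hχ : ∀ p, ‖χ p‖ ≤ C) (A : ℝ) {B : ℝ} (hB : 0 < B) :
    Tendsto (latticeSum m χ) (atImInfty ⊓ 𝓟 (verticalStrip A B))
      (𝓝 (∑' k : {k : ℤ // k ≠ 0}, χ (0, k) / (k : ℂ) ^ m)) := by
  rw [← tsum_ite_fst_eq_zero fun p => χ p / (p.2 : ℂ) ^ m]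
  set R := EisensteinSeries.r ⟨⟨A, B⟩, hB⟩ ^ (-(m : ℝ))
  refine tendsto_tsum_of_dominated_convergence
    (bound := fun p => C * (R * ‖(finTwoArrowEquiv ℤ).symm p‖ ^ (-(m : ℝ))))
    (((summable_norm_finTwoArrowEquiv_symm_rpow_neg (by norm_cast)).mul_left R).mul_left C)
    (fun p => ?_) ?_
  · split_ifs with h
    · simpa [h] using tendsto_const_nhds
    · exact (tendsto_div_int_mul_add_pow_atImInfty _ h _ (by omega)).mono_left inf_le_left
  · refine eventually_inf_principal.2 (Eventually.of_forall fun τ hτ p => ?_)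
    have hbound := EisensteinSeries.summand_bound_of_mem_verticalStrip (Nat.cast_nonneg m)
      ((finTwoArrowEquiv ℤ).symm p) hB hτ
    simp only [finTwoArrowEquiv_symm_apply, Matrix.cons_val_zero, Matrix.cons_val_one] at hbound
    rw [norm_div, norm_pow, div_eq_mul_inv, ← Real.rpow_natCast, ← Real.rpow_neg (norm_nonneg _)]
    exact mul_le_mul (hχ p) hbound (by positivity) ((norm_nonneg _).trans (hχ p))

lemma tendsto_latticeSum_atImInfty {m : ℕ} (hm : 3 ≤ m) {χ : ℤ × ℤ → ℂ} {C : ℝ}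
    (hχ : ∀ p, ‖χ p‖ ≤ C) {N : ℕ} (hN : 0 < N)
    (hper : ∀ (p : ℤ × ℤ) (n : ℤ), χ (p.1, p.2 + N * n) = χ p) :
    Tendsto (latticeSum m χ) atImInfty
      (𝓝 (∑' k : {k : ℤ // k ≠ 0}, χ (0, k) / (k : ℂ) ^ m)) := by
  refine tendsto_atImInfty_of_T_zpow_invariant hN (fun n τ => latticeSum_T_zpow_smul m
    (fun p => ?_) τ) (tendsto_latticeSum_inf_verticalStrip hm hχ N one_pos)
  rw [← hper p (-(p.1 * n))]
  congr 2
  ring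

end

lemma norm_exp_two_pi_I_mul_ratCast (x : ℚ) : ‖exp (2 * Real.pi * I * x)‖ = 1 := by
  rw [show 2 * Real.pi * I * x = ((2 * Real.pi * x : ℝ) : ℂ) * I by push_cast; ring,
    norm_exp_ofReal_mul_I]

lemma exp_two_pi_I_mul_ratCast_zpow_eq_one {x : ℚ} {N : ℕ} {k : ℤ} (h : (N : ℚ) * x = k) :
    exp (2 * Real.pi * I * x) ^ (N : ℤ) = 1 := by
  have hC : (N : ℂ) * x = k := by exact_mod_cast congrArg (Rat.cast (K := ℂ)) h
  rw [← exp_int_mul, ← exp_int_mul_two_pi_mul_I k]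
  congr 1
  push_cast
  linear_combination 2 * Real.pi * I * hC

/-- For `m ≥ 3`, `N ≥ 1`, `x_α ∈ ℚ` with `N x_α ∈ ℤ`, `ζ = e^{2πi x_α}`, and
`γ = [[a,b],[c,d]] ∈ SL₂(ℤ)`, the value of `G_{m,ζ}` at the cusp `γ(i∞)`:
`(cτ+d)^{−m} G_{m,ζ}(γτ) → ∑_{k≠0} ζ^{−ck}/k^m` as `Im τ → ∞`. -/
theorem eisGzeta_cusp_value (m : ℕ) (hm : 3 ≤ m) (N : ℕ) (hN : 1 ≤ N) (xα : ℚ)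
    (hxα : ∃ k : ℤ, (N : ℚ) * xα = (k : ℚ)) (γ : SL(2,ℤ)) :
    Tendsto (fun τ : UpperHalfPlane =>
        (((γ : Matrix (Fin 2) (Fin 2) ℤ) 1 0 : ℂ) * (τ : ℂ)
            + ((γ : Matrix (Fin 2) (Fin 2) ℤ) 1 1 : ℂ)) ^ (-(m : ℤ)) *
          eisGzeta m (Complex.exp (2 * Real.pi * I * (xα : ℂ))) (γ • τ))
      UpperHalfPlane.atImInfty
      (nhds (∑' k : {k : ℤ // k ≠ 0},
        Complex.exp (2 * Real.pi * I * (xα : ℂ)) ^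
            (-((γ : Matrix (Fin 2) (Fin 2) ℤ) 1 0 * (k : ℤ))) /
          ((k : ℤ) : ℂ) ^ m)) := by
  set ζ := exp (2 * Real.pi * I * (xα : ℂ))
  obtain ⟨k, hk⟩ := hxα
  have hζN : ζ ^ (N : ℤ) = 1 := exp_two_pi_I_mul_ratCast_zpow_eq_one hk
  have hbound (p : ℤ × ℤ) : ‖ζ ^ (p.1 * γ 1 1 - p.2 * γ 1 0)‖ ≤ 1 := by
    rw [norm_zpow, norm_exp_two_pi_I_mul_ratCast, one_zpow]
  have hper (p : ℤ × ℤ) (n : ℤ) :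
      ζ ^ (p.1 * γ 1 1 - (p.2 + N * n) * γ 1 0) = ζ ^ (p.1 * γ 1 1 - p.2 * γ 1 0) := by
    rw [show p.1 * γ 1 1 - (p.2 + N * n) * γ 1 0 = p.1 * γ 1 1 - p.2 * γ 1 0 + N * -(n * γ 1 0)
      by ring, zpow_add₀ (exp_ne_zero _), zpow_mul, hζN, one_zpow, mul_one]
  simp only [eisGzeta_eq_latticeSum, latticeSum_smul]
  convert tendsto_latticeSum_atImInfty (χ := (fun p : ℤ × ℤ => ζ ^ p.1) ∘ (rowMulEquiv γ).symm)
    hm hbound hN hper using 2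
  refine tsum_congr fun j => ?_
  simp [rowMulEquiv_symm_apply, mul_comm]
end
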